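/- Let D ∈ R^{m×n} be a fixed matrix (the Jacobian ∂L/∂W of a loss with respect to hidden weights, with entries d_{k,l}), and let V ∈ R^{m×n} be a random matrix with i.i.d. N(0,1) entries. Define the weight-perturbed forward gradient estimate g_{i,j} = (∑_{k,l} d_{k,l} v_{k,l}) v_{i,j}. Then Var[g_{i,j}] = d_{i,j}^2 + ‖D‖_F^2, where ‖D‖_F^2 is the squared Frobenius norm. -/

import Mathlib

open MeasureTheory ProbabilityTheory Real Set

section FGWAux

lemma fgw_integrable_pow_mul_gaussExp (k : ℕ) :
    Integrable (fun x : ℝ => x ^ k * Real.exp (-(2⁻¹:ℝ) * x ^ 2)) := by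
  have h := integrable_rpow_mul_exp_neg_mul_sq (b := 2⁻¹) (by norm_num) (s := (k:ℝ))
    (lt_of_lt_of_le (by norm_num) (Nat.cast_nonneg k))
  simpa [Real.rpow_natCast] using h

lemma fgw_I_odd (k : ℕ) (hk : Odd k) :
    ∫ x : ℝ, x ^ k * Real.exp (-(2⁻¹:ℝ) * x ^ 2) = 0 := by
  have h := MeasureTheory.integral_neg_eq_self
    (fun x : ℝ => x ^ k * Real.exp (-(2⁻¹:ℝ) * x ^ 2)) volume
  simp only [hk.neg_pow, neg_sq, neg_mul, integral_neg] at h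
  simp only [neg_mul]
  linarith

lemma fgw_Ioi_val (q : ℝ) (hq : -1 < q) :
    ∫ x in Ioi (0:ℝ), x ^ q * Real.exp (-(2⁻¹:ℝ) * x ^ (2:ℝ)) =
      (2:ℝ) ^ ((q+1)/2) * (1/2) * Real.Gamma ((q+1)/2) := by
  rw [integral_rpow_mul_exp_neg_mul_rpow (by norm_num) hq (by norm_num)]
  congr 2
  rw [← Real.rpow_neg_one (2:ℝ), ← Real.rpow_mul (by norm_num)]
  congr 1
  ring

lemma fgw_I_even (j : ℕ) :
    ∫ x : ℝ, x ^ (2*j) * Real.exp (-(2⁻¹:ℝ) * x ^ 2) =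
      (2:ℝ) ^ ((((2*j:ℕ):ℝ)+1)/2) * Real.Gamma ((((2*j:ℕ):ℝ)+1)/2) := by
  have habs : (fun x : ℝ => x ^ (2*j) * Real.exp (-(2⁻¹:ℝ) * x ^ 2))
      = fun x : ℝ => |x| ^ (2*j) * Real.exp (-(2⁻¹:ℝ) * |x| ^ 2) := by
    funext x
    rw [(even_two_mul j).pow_abs, (even_two (α := ℕ)).pow_abs]
  rw [habs, integral_comp_abs (f := fun x : ℝ => x ^ (2*j) * Real.exp (-(2⁻¹:ℝ) * x ^ 2))]
  have hpt : ∀ x ∈ Ioi (0:ℝ), x ^ (2*j) * Real.exp (-(2⁻¹:ℝ) * x ^ 2)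
      = x ^ ((2*j:ℕ):ℝ) * Real.exp (-(2⁻¹:ℝ) * x ^ (2:ℝ)) := by
    intro x _
    rw [Real.rpow_natCast, show (2:ℝ) = ((2:ℕ):ℝ) by norm_num, Real.rpow_natCast]
  rw [setIntegral_congr_fun measurableSet_Ioi hpt,
    fgw_Ioi_val _ (lt_of_lt_of_le (by norm_num) (Nat.cast_nonneg _))]
  ring

lemma fgw_I_two : ∫ x : ℝ, x ^ 2 * Real.exp (-(2⁻¹:ℝ) * x ^ 2) = Real.sqrt (2*π) := by
  have h := fgw_I_even 1
  norm_num at h ⊢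
  rw [h]
  have hg : Real.Gamma ((3:ℝ)/2) = (1/2) * Real.sqrt π := by
    rw [show (3:ℝ)/2 = 1/2 + 1 by norm_num, Real.Gamma_add_one (by norm_num),
      Real.Gamma_one_half_eq]
  have h2 : (2:ℝ) ^ ((3:ℝ)/2) = 2 * Real.sqrt 2 := by
    rw [show (3:ℝ)/2 = 1 + 1/2 by norm_num, Real.rpow_add (by norm_num), Real.rpow_one,
      ← Real.sqrt_eq_rpow]
  rw [hg, h2]
  ring

lemma fgw_I_four : ∫ x : ℝ, x ^ 4 * Real.exp (-(2⁻¹:ℝ) * x ^ 2) = 3 * Real.sqrt (2*π) := by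
  have h := fgw_I_even 2
  norm_num at h ⊢
  rw [h]
  have hg : Real.Gamma ((5:ℝ)/2) = (3/4) * Real.sqrt π := by
    rw [show (5:ℝ)/2 = 3/2 + 1 by norm_num, Real.Gamma_add_one (by norm_num),
      show (3:ℝ)/2 = 1/2 + 1 by norm_num, Real.Gamma_add_one (by norm_num),
      Real.Gamma_one_half_eq]
    ring
  have h2 : (2:ℝ) ^ ((5:ℝ)/2) = 4 * Real.sqrt 2 := by
    rw [show (5:ℝ)/2 = 2 + 1/2 by norm_num, Real.rpow_add (by norm_num),
      ← Real.sqrt_eq_rpow]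
    norm_num [show ((2:ℝ))^(2:ℝ) = 4 by
      rw [show (2:ℝ) = ((2:ℕ):ℝ) from by norm_num]; rw [Real.rpow_natCast]; norm_num]
  rw [hg, h2]
  ring

lemma fgw_pdf_eq (x : ℝ) :
    gaussianPDFReal 0 1 x = (Real.sqrt (2*π))⁻¹ * Real.exp (-(2⁻¹:ℝ) * x ^ 2) := by
  simp only [gaussianPDFReal, NNReal.coe_one, mul_one, sub_zero]
  congr 1
  ring

lemma fgw_integral_pow_gaussianReal (k : ℕ) :
    ∫ x, x ^ k ∂(gaussianReal 0 1)
      = (Real.sqrt (2*π))⁻¹ * ∫ x : ℝ, x ^ k * Real.exp (-(2⁻¹:ℝ) * x ^ 2) := by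
  rw [gaussianReal_of_var_ne_zero 0 one_ne_zero,
    show gaussianPDF 0 1
      = fun x => (((gaussianPDFReal 0 1 x).toNNReal : NNReal) : ENNReal) from rfl,
    integral_withDensity_eq_integral_smul ((measurable_gaussianPDFReal 0 1).real_toNNReal) _,
    ← integral_const_mul]
  congr 1
  funext x
  rw [NNReal.smul_def, smul_eq_mul, Real.coe_toNNReal _ (gaussianPDFReal_nonneg 0 1 x),
    fgw_pdf_eq]
  ring

lemma fgw_integrable_pow_gaussianReal (k : ℕ) :
    Integrable (fun x : ℝ => x ^ k) (gaussianReal 0 1) := by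
  rw [gaussianReal_of_var_ne_zero 0 one_ne_zero,
    show gaussianPDF 0 1
      = fun x => (((gaussianPDFReal 0 1 x).toNNReal : NNReal) : ENNReal) from rfl,
    integrable_withDensity_iff_integrable_smul ((measurable_gaussianPDFReal 0 1).real_toNNReal)]
  have heq : (fun x : ℝ => (gaussianPDFReal 0 1 x).toNNReal • x ^ k)
      = fun x : ℝ => (Real.sqrt (2*π))⁻¹ * (x ^ k * Real.exp (-(2⁻¹:ℝ) * x ^ 2)) := by
    funext x
    rw [NNReal.smul_def, smul_eq_mul, Real.coe_toNNReal _ (gaussianPDFReal_nonneg 0 1 x),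
      fgw_pdf_eq]
    ring
  rw [heq]
  exact (fgw_integrable_pow_mul_gaussExp k).const_mul _

lemma fgw_sqrt_two_pi_pos : 0 < Real.sqrt (2*π) :=
  Real.sqrt_pos.mpr (by positivity)

lemma fgw_m1 : ∫ x, x ^ 1 ∂(gaussianReal 0 1) = 0 := by
  rw [fgw_integral_pow_gaussianReal, fgw_I_odd 1 (by norm_num)]
  ring

lemma fgw_m2 : ∫ x, x ^ 2 ∂(gaussianReal 0 1) = 1 := by
  rw [fgw_integral_pow_gaussianReal, fgw_I_two]
  exact inv_mul_cancel₀ (ne_of_gt fgw_sqrt_two_pi_pos)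

lemma fgw_m4 : ∫ x, x ^ 4 ∂(gaussianReal 0 1) = 3 := by
  rw [fgw_integral_pow_gaussianReal, fgw_I_four]
  rw [← mul_assoc, mul_comm ((Real.sqrt (2*π))⁻¹) 3, mul_assoc,
    inv_mul_cancel₀ (ne_of_gt fgw_sqrt_two_pi_pos), mul_one]

end FGWAux

open MeasureTheory ProbabilityTheory

/-- Variance of the weight-perturbed forward gradient (FG-W): for a fixed matrix `D`
and i.i.d. standard normal perturbations `V`,
`Var[(∑_{k,l} d_{k,l} v_{k,l}) v_{i,j}] = d_{i,j}^2 + ‖D‖_F²`. -/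
theorem fgw_variance
    {Ω : Type*} [MeasurableSpace Ω] {μ : Measure Ω} [IsProbabilityMeasure μ]
    {m n : ℕ} (D : Matrix (Fin m) (Fin n) ℝ)
    (V : Fin m × Fin n → Ω → ℝ)
    (hmeas : ∀ p, Measurable (V p))
    (hindep : iIndepFun V μ)
    (hgauss : ∀ p, Measure.map (V p) μ = gaussianReal 0 1) :
    ∀ i j, variance (fun ω => (∑ p : Fin m × Fin n, D p.1 p.2 * V p ω) * V (i, j) ω) μ
      = D i j ^ 2 + ∑ p : Fin m × Fin n, D p.1 p.2 ^ 2 := by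
  intro i j
  set q : Fin m × Fin n := (i, j) with hqdef
  have hint : ∀ (p : Fin m × Fin n) (k : ℕ), Integrable (fun ω => V p ω ^ k) μ := by
    intro p k
    have h := (integrable_map_measure (f := V p) (g := fun x : ℝ => x ^ k)
      (by rw [hgauss p]; exact (measurable_id.pow_const k).aestronglyMeasurable)
      (hmeas p).aemeasurable).mp
      (by rw [hgauss p]; exact fgw_integrable_pow_gaussianReal k)
    exact h
  have hmom : ∀ (p : Fin m × Fin n) (k : ℕ),
      ∫ ω, V p ω ^ k ∂μ = ∫ x, x ^ k ∂(gaussianReal 0 1) := by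
    intro p k
    rw [← hgauss p, integral_map (hmeas p).aemeasurable
      (by exact (measurable_id.pow_const k).aestronglyMeasurable)]
  have hm1 : ∀ p, ∫ ω, V p ω ^ 1 ∂μ = 0 := fun p => (hmom p 1).trans fgw_m1
  have hm2 : ∀ p, ∫ ω, V p ω ^ 2 ∂μ = 1 := fun p => (hmom p 2).trans fgw_m2
  have hm4 : ∀ p, ∫ ω, V p ω ^ 4 ∂μ = 3 := fun p => (hmom p 4).trans fgw_m4
  have hTwoE : ∀ (p r : Fin m × Fin n), p ≠ r → ∀ (a b : ℕ),
      ∫ ω, V p ω ^ a * V r ω ^ b ∂μ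
        = (∫ ω, V p ω ^ a ∂μ) * ∫ ω, V r ω ^ b ∂μ := by
    intro p r hpr a b
    exact ((hindep.indepFun hpr).comp (measurable_id.pow_const a)
      (measurable_id.pow_const b)).integral_mul_eq_mul_integral
      ((hmeas p).pow_const a).aestronglyMeasurable
      ((hmeas r).pow_const b).aestronglyMeasurable
  have hTwoI : ∀ (p r : Fin m × Fin n), p ≠ r → ∀ (a b : ℕ),
      Integrable (fun ω => V p ω ^ a * V r ω ^ b) μ := by
    intro p r hpr a b
    exact ((hindep.indepFun hpr).comp (measurable_id.pow_const a)
      (measurable_id.pow_const b)).integrable_mul (hint p a) (hint r b)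
  have hThree : ∀ (p r s : Fin m × Fin n), p ≠ r → p ≠ s → r ≠ s →
      ∫ ω, V p ω * (V r ω * V s ω ^ 2) ∂μ = 0 := by
    intro p r s hpr hps hrs
    set g : Fin m × Fin n → ℝ → ℝ := fun t => if t = s then (fun x => x ^ 2) else id
      with hgdef
    set W : Fin m × Fin n → Ω → ℝ := fun t => g t ∘ V t with hWdef
    have hgm : ∀ t, Measurable (g t) := by
      intro t
      by_cases h : t = s
      · simp only [hgdef, h, if_pos rfl]
        exact measurable_id.pow_const 2
      · simp only [hgdef, if_neg h]
        exact measurable_id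
    have hWmeas : ∀ t, Measurable (W t) := fun t => (hgm t).comp (hmeas t)
    have hWindep : iIndepFun W μ := hindep.comp g hgm
    have hprodeq : (∏ t ∈ ({r, s} : Finset (Fin m × Fin n)), W t) = W r * W s :=
      Finset.prod_pair hrs
    have hIF : IndepFun (W r * W s) (W p) μ := by
      have h0 := hWindep.indepFun_finsetProd_of_notMem hWmeas
        (s := {r, s}) (i := p) (by simp [hpr, hps])
      rwa [hprodeq] at h0
    have hmul := hIF.symm.integral_mul_eq_mul_integral (hWmeas p).aestronglyMeasurable
      (((hWmeas r).mul (hWmeas s)).aestronglyMeasurable)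
    have hfe : (fun ω => V p ω * (V r ω * V s ω ^ 2)) = W p * (W r * W s) := by
      funext ω
      simp [hWdef, hgdef, if_neg hps, if_neg hrs, Function.comp]
    have hWp0 : integral μ (W p) = 0 := by
      have hWp : W p = V p := by
        funext ω; simp [hWdef, hgdef, if_neg hps, Function.comp]
      rw [hWp]
      simpa [pow_one] using hm1 p
    calc ∫ ω, V p ω * (V r ω * V s ω ^ 2) ∂μ
        = integral μ (W p * (W r * W s)) := by rw [hfe]
      _ = integral μ (W p) * integral μ (W r * W s) := hmul
      _ = 0 := by rw [hWp0, zero_mul]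
  have hPair2 : ∀ p : Fin m × Fin n, MemLp (fun ω => V p ω * V q ω) 2 μ := by
    intro p
    rw [memLp_two_iff_integrable_sq (f := fun ω => V p ω * V q ω) ((hmeas p).mul (hmeas q)).aestronglyMeasurable]
    by_cases h : p = q
    · rw [← h]
      have he : (fun ω => (V p ω * V p ω) ^ 2) = fun ω => V p ω ^ 4 := by
        funext ω; ring
      rw [he]
      exact hint p 4
    · have he : (fun ω => (V p ω * V q ω) ^ 2) = fun ω => V p ω ^ 2 * V q ω ^ 2 := by
        funext ω; ring
      rw [he]
      exact hTwoI p q h 2 2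
  have hTermI : ∀ p p' : Fin m × Fin n,
      Integrable (fun ω => (V p ω * V q ω) * (V p' ω * V q ω)) μ := by
    intro p p'
    have hs := (hPair2 p').smul (hPair2 p) (r := 1)
    rw [memLp_one_iff_integrable] at hs
    have he : ((fun ω => V p ω * V q ω) • fun ω => V p' ω * V q ω)
        = fun ω => (V p ω * V q ω) * (V p' ω * V q ω) := by
      funext ω; simp [Pi.smul_apply, smul_eq_mul]
    rwa [he] at hs
  have hPairI : ∀ p : Fin m × Fin n, Integrable (fun ω => V p ω * V q ω) μ := by
    intro p
    by_cases h : p = q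
    · rw [← h]
      have he : (fun ω => V p ω * V p ω) = fun ω => V p ω ^ 2 := by funext ω; ring
      rw [he]; exact hint p 2
    · simpa [pow_one] using hTwoI p q h 1 1
  have hTermE : ∀ p p' : Fin m × Fin n,
      ∫ ω, (V p ω * V q ω) * (V p' ω * V q ω) ∂μ
        = if p = p' then (if p = q then 3 else 1) else 0 := by
    intro p p'
    by_cases hpp : p = p'
    · rw [← hpp]
      by_cases hpq : p = q
      · rw [← hpq, if_pos rfl, if_pos rfl]
        have he : (fun ω => (V p ω * V p ω) * (V p ω * V p ω)) = fun ω => V p ω ^ 4 := by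
          funext ω; ring
        rw [he]
        exact hm4 p
      · rw [if_pos rfl, if_neg hpq]
        have he : (fun ω => (V p ω * V q ω) * (V p ω * V q ω))
            = fun ω => V p ω ^ 2 * V q ω ^ 2 := by funext ω; ring
        rw [he, hTwoE p q hpq 2 2, hm2 p, hm2 q, one_mul]
    · rw [if_neg hpp]
      by_cases hpq : p = q
      · rw [← hpq]
        have he : (fun ω => (V p ω * V p ω) * (V p' ω * V p ω))
            = fun ω => V p ω ^ 3 * V p' ω ^ 1 := by funext ω; ring
        rw [he, hTwoE p p' hpp 3 1, hm1 p', mul_zero]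
      · by_cases hp'q : p' = q
        · rw [← hp'q]
          have he : (fun ω => (V p ω * V p' ω) * (V p' ω * V p' ω))
              = fun ω => V p ω ^ 1 * V p' ω ^ 3 := by funext ω; ring
          rw [he, hTwoE p p' hpp 1 3, hm1 p, zero_mul]
        · have he : (fun ω => (V p ω * V q ω) * (V p' ω * V q ω))
              = fun ω => V p ω * (V p' ω * V q ω ^ 2) := by funext ω; ring
          rw [he]
          exact hThree p p' q hpp hpq hp'q
  have hXeq : (fun ω => (∑ p : Fin m × Fin n, D p.1 p.2 * V p ω) * V q ω)
      = fun ω => ∑ p : Fin m × Fin n, D p.1 p.2 * (V p ω * V q ω) := by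
    funext ω
    rw [Finset.sum_mul]
    exact Finset.sum_congr rfl fun p _ => by ring
  rw [hXeq]
  set X : Ω → ℝ := fun ω => ∑ p : Fin m × Fin n, D p.1 p.2 * (V p ω * V q ω) with hXdef
  have hX2 : MemLp X 2 μ := by
    have he : X = ∑ p : Fin m × Fin n, fun ω => D p.1 p.2 * (V p ω * V q ω) := by
      funext ω; simp [hXdef, Finset.sum_apply]
    rw [he]
    exact memLp_finsetSum' _ fun p _ => (hPair2 p).const_mul _
  rw [variance_eq_sub hX2]
  have hEX : ∫ ω, X ω ∂μ = D i j := by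
    have h0 : ∫ ω, X ω ∂μ
        = ∑ p : Fin m × Fin n, ∫ ω, D p.1 p.2 * (V p ω * V q ω) ∂μ := by
      rw [show (fun ω => X ω)
          = fun ω => ∑ p : Fin m × Fin n, D p.1 p.2 * (V p ω * V q ω) from rfl]
      exact integral_finset_sum _ fun p _ => (hPairI p).const_mul _
    rw [h0]
    have hterm : ∀ p : Fin m × Fin n,
        ∫ ω, D p.1 p.2 * (V p ω * V q ω) ∂μ = if p = q then D p.1 p.2 else 0 := by
      intro p
      rw [integral_const_mul]
      by_cases h : p = q
      · rw [if_pos h, ← h]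
        have he : (fun ω => V p ω * V p ω) = fun ω => V p ω ^ 2 := by funext ω; ring
        rw [he, hm2 p, mul_one]
      · rw [if_neg h]
        have he : (fun ω => V p ω * V q ω) = fun ω => V p ω ^ 1 * V q ω ^ 1 := by
          funext ω; ring
        rw [he, hTwoE p q h 1 1, hm1 p, zero_mul, mul_zero]
    rw [Finset.sum_congr rfl fun p _ => hterm p, Finset.sum_ite_eq' Finset.univ q
      (fun p => D p.1 p.2), if_pos (Finset.mem_univ q)]
  have hEX2 : ∫ ω, X ω ^ 2 ∂μ
      = 2 * D i j ^ 2 + ∑ p : Fin m × Fin n, D p.1 p.2 ^ 2 := by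
    have hsq : (fun ω => X ω ^ 2)
        = fun ω => ∑ p : Fin m × Fin n, ∑ p' : Fin m × Fin n,
            (D p.1 p.2 * D p'.1 p'.2) * ((V p ω * V q ω) * (V p' ω * V q ω)) := by
      funext ω
      simp only [hXdef]
      rw [sq, Finset.sum_mul_sum]
      exact Finset.sum_congr rfl fun p _ => Finset.sum_congr rfl fun p' _ => by ring
    rw [hsq, integral_finset_sum _ fun p _ =>
      integrable_finset_sum _ fun p' _ => (hTermI p p').const_mul _]
    have hrowsum : ∀ p : Fin m × Fin n,
        ∫ ω, ∑ p' : Fin m × Fin n,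
            (D p.1 p.2 * D p'.1 p'.2) * ((V p ω * V q ω) * (V p' ω * V q ω)) ∂μ
          = D p.1 p.2 ^ 2 * (if p = q then 3 else 1) := by
      intro p
      rw [integral_finset_sum _ fun p' _ => (hTermI p p').const_mul _]
      have hterm : ∀ p' : Fin m × Fin n,
          ∫ ω, (D p.1 p.2 * D p'.1 p'.2) * ((V p ω * V q ω) * (V p' ω * V q ω)) ∂μ
            = if p' = p then D p.1 p.2 ^ 2 * (if p = q then 3 else 1) else 0 := by
        intro p'
        rw [integral_const_mul, hTermE p p']
        by_cases h : p' = p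
        · rw [if_pos h, h, if_pos rfl]
          ring
        · rw [if_neg h, if_neg (fun hh => h hh.symm), mul_zero]
      rw [Finset.sum_congr rfl fun p' _ => hterm p',
        Finset.sum_ite_eq' Finset.univ p _, if_pos (Finset.mem_univ p)]
    rw [Finset.sum_congr rfl fun p _ => hrowsum p]
    have hsplit : ∀ p : Fin m × Fin n,
        D p.1 p.2 ^ 2 * (if p = q then 3 else 1)
          = (if p = q then 2 * D p.1 p.2 ^ 2 else 0) + D p.1 p.2 ^ 2 := by
      intro p
      by_cases h : p = q
      · rw [if_pos h, if_pos h]; ring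
      · rw [if_neg h, if_neg h]; ring
    rw [Finset.sum_congr rfl fun p _ => hsplit p, Finset.sum_add_distrib,
      Finset.sum_ite_eq' Finset.univ q _, if_pos (Finset.mem_univ q)]
  have hfinal : ∫ ω, (X ^ 2) ω ∂μ = ∫ ω, X ω ^ 2 ∂μ := by
    congr 1
  rw [hfinal, hEX, hEX2]
  ring
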